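/- Let η be a symmetric nondegenerate N×N complex matrix and K = η∂_x. Let h̄_{β,q} ∈ Λ̂_N^{[0]} (1 ≤ β ≤ N, q ≥ 0) be pairwise commuting local functionals, {h̄_{β,q}, h̄_{γ,p}}_K = 0, such that h̄_{1,0} generates the spatial translations, K^{αμ} δh̄_{1,0}/δu^μ = u^α_x. Suppose that ∂h̄_{β,q}/∂u^1 = h̄_{β,q−1} for all q ≥ 1 and ∂h̄_{β,0}/∂u^1 = ∫ θ_{βμ} u^μ dx for some nondegenerate complex matrix θ = (θ_{βμ}). Then the differential polynomials h_{β,q} := δh̄_{β,q+1}/δu^1, q ≥ −1, define a tau-structure for this hierarchy: the h̄_{β,−1} := ∫ h_{β,−1} dx = ∫ θ_{βμ}u^μ dx are N linearly independent Casimirs of K, ∫ h_{β,q} dx = h̄_{β,q} for q ≥ 0, and the tau-symmetry {h_{α,p−1}, h̄_{β,q}}_K = {h_{β,q−1}, h̄_{α,p}}_K holds for all 1 ≤ α,β ≤ N and p,q ≥ 0. -/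

import Mathlib

/-!
Common formal framework for the theory of differential polynomials, local
functionals and tau-structures, following Buryak–Dubrovin–Guéré–Rossi.

Variables of the algebra of differential polynomials: `Sum.inl (α, i)` stands
for `u^α_i` (with `u^α = u^α_0`) and `Sum.inr ()` stands for `ε`.  The paper's
index `1` (the unit direction) corresponds to `(0 : Fin N)` here.
-/

/-- The variables of the algebra of differential polynomials. -/
abbrev DVar (N : ℕ) : Type := (Fin N × ℕ) ⊕ Unit

/-- The ring `Â_N` of (extended) differential polynomials, realized inside the
ring of formal power series in the variables `u^α_i` and `ε`. -/
abbrev DP (N : ℕ) : Type := MvPowerSeries (DVar N) ℂ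

namespace DP

variable {N : ℕ}

/-- Coefficient of a monomial. -/
noncomputable def co (f : DP N) (m : DVar N →₀ ℕ) : ℂ :=
  MvPowerSeries.coeff m f

/-- Build a power series from its coefficients. -/
def ofCo (F : (DVar N →₀ ℕ) → ℂ) : DP N := F

/-- The variable `u^α_i`. -/
noncomputable def uv (α : Fin N) (i : ℕ) : DP N :=
  MvPowerSeries.X (Sum.inl (α, i))

/-- The variable `ε`. -/
noncomputable def eps : DP N := MvPowerSeries.X (Sum.inr ())

/-- The partial derivative `∂/∂v` with respect to one of the variables. -/
noncomputable def pd (v : DVar N) (f : DP N) : DP N :=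
  ofCo fun m => ((m v : ℂ) + 1) * co f (m + Finsupp.single v 1)

/-- The spatial derivative `∂_x = Σ_{α,i} u^α_{i+1} ∂/∂u^α_i`. -/
noncomputable def dx (f : DP N) : DP N :=
  ofCo fun m =>
    ∑ v ∈ m.support,
      (match v with
        | Sum.inl (α, i + 1) =>
            co (pd (Sum.inl (α, i)) f) (m - Finsupp.single (Sum.inl (α, i + 1)) 1)
        | _ => (0 : ℂ))

/-- The variational derivative `δ/δu^μ = Σ_{i≥0} (−∂_x)^i ∘ ∂/∂u^μ_i`. -/
noncomputable def vd (μ : Fin N) (f : DP N) : DP N :=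
  ofCo fun m => ∑ᶠ i : ℕ, ((-1 : ℂ) ^ i) * co (dx^[i] (pd (Sum.inl (μ, i)) f)) m

/-- The weighted degree of a monomial: `deg u^α_i = i`, `deg ε = −1`. -/
noncomputable def wdeg (m : DVar N →₀ ℕ) : ℤ :=
  ∑ v ∈ m.support,
    (match v with
      | Sum.inl (_, i) => (i : ℤ)
      | Sum.inr _ => (-1 : ℤ)) * (m v : ℤ)

/-- Degree-`k` homogeneity (membership in `Â_N^{[k]}`). -/
def IsHomog (k : ℤ) (f : DP N) : Prop :=
  ∀ m, co f m ≠ 0 → wdeg m = k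

/-- Being a constant, i.e. an element of `ℂ[[ε]]`. -/
def IsConst (f : DP N) : Prop :=
  ∀ m, co f m ≠ 0 → ∀ v ∈ m.support, v = Sum.inr ()

/-- Vanishing of the evaluation at `u^*_* = 0`. -/
def VanishAtU0 (f : DP N) : Prop :=
  ∀ k : ℕ, co f (Finsupp.single (Sum.inr ()) k) = 0

/-- Being a genuine differential polynomial: in each ε-degree at most `e`,
polynomiality (bounded degree, boundedly many variables) in the jet
variables `u^α_i`, `i ≥ 1`. -/
def IsDiffPoly (f : DP N) : Prop :=
  ∀ e : ℕ, ∃ D : ℕ, ∀ m, co f m ≠ 0 → m (Sum.inr ()) ≤ e →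
    ((∑ v ∈ m.support,
        (match v with
          | Sum.inl (_, _ + 1) => m v
          | _ => 0)) ≤ D) ∧
      ∀ (α : Fin N) (i : ℕ), D < i → m (Sum.inl (α, i)) = 0

/-- The submodule of constants `ℂ[[ε]] ⊆ Â_N`. -/
noncomputable def constSub (N : ℕ) : Submodule ℂ (DP N) where
  carrier := {f | IsConst f}
  add_mem' := by
    intro f g hf hg m hm
    have hco : co (f + g) m = co f m + co g m := map_add _ _ _
    by_cases h1 : co f m = 0
    · have h2 : co g m ≠ 0 := by
        intro h2; exact hm (by rw [hco, h1, h2, add_zero])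
      exact hg m h2
    · exact hf m h1
  zero_mem' := by
    intro m hm
    exact (hm (map_zero (MvPowerSeries.coeff (R := ℂ) m))).elim
  smul_mem' := by
    intro c f hf m hm
    have hne : co f m ≠ 0 := by
      intro h
      apply hm
      have hsm : co (c • f) m = c * co f m := by
        simp [co]
      rw [hsm, h, mul_zero]
    exact hf m hne

/-- The submodule `ℂ[[ε]] + ∂_x(Â_N)` by which one quotients to get local
functionals. -/
noncomputable def lfSub (N : ℕ) : Submodule ℂ (DP N) :=
  constSub N ⊔ Submodule.span ℂ (Set.range (dx : DP N → DP N))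

/-- The space `Λ̂_N` of local functionals. -/
abbrev LF (N : ℕ) := DP N ⧸ lfSub N

/-- The projection `f ↦ ∫ f dx`. -/
noncomputable def intg : DP N →ₗ[ℂ] LF N := (lfSub N).mkQ

/-- A choice of density for a local functional. -/
noncomputable def rep (h : LF N) : DP N :=
  (Submodule.Quotient.mk_surjective (lfSub N) h).choose

/-- The variational derivative `δ/δu^μ` of a local functional. -/
noncomputable def vdQ (μ : Fin N) (h : LF N) : DP N := vd μ (rep h)

/-- The partial derivative `∂/∂v` of a local functional. -/
noncomputable def pdQ (v : DVar N) (h : LF N) : LF N := intg (pd v (rep h))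

/-- The degree-`k` local functionals `Λ̂_N^{[k]}`. -/
noncomputable def LFHomog (N : ℕ) (k : ℤ) : Set (LF N) :=
  intg '' {f : DP N | IsHomog k f ∧ IsDiffPoly f}

/-- The operator `K = η ∂_x` applied to a tuple of differential polynomials. -/
noncomputable def etaAp (η : Matrix (Fin N) (Fin N) ℂ) (α : Fin N)
    (g : Fin N → DP N) : DP N :=
  ∑ ν : Fin N, η α ν • dx (g ν)

/-- The bracket `{f̄, ḡ}_{η∂_x}` of local functionals. -/
noncomputable def lfbEta (η : Matrix (Fin N) (Fin N) ℂ) (f g : LF N) : LF N :=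
  intg (∑ μ : Fin N, vdQ μ f * etaAp η μ fun ν => vdQ ν g)

/-- The bracket `{f, h̄}_{η∂_x}` of a differential polynomial with a local
functional. -/
noncomputable def pbEta (η : Matrix (Fin N) (Fin N) ℂ) (f : DP N) (h : LF N) : DP N :=
  ofCo fun m => ∑ γ : Fin N, ∑ᶠ n : ℕ,
    co (pd (Sum.inl (γ, n)) f * dx^[n] (etaAp η γ fun μ => vdQ μ h)) m

/-- A general operator `K^{γν} = Σ_j K^{γν}_j ∂_x^j` applied to a tuple of
differential polynomials. -/
noncomputable def Kap (K : Fin N → Fin N → ℕ → DP N) (γ : Fin N)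
    (g : Fin N → DP N) : DP N :=
  ∑ ν : Fin N, ofCo fun m => ∑ᶠ j : ℕ, co (K γ ν j * dx^[j] (g ν)) m

/-- The bracket `{f̄, ḡ}_K` of local functionals. -/
noncomputable def lfbK (K : Fin N → Fin N → ℕ → DP N) (f g : LF N) : LF N :=
  intg (∑ μ : Fin N, vdQ μ f * Kap K μ fun ν => vdQ ν g)

/-- The bracket `{f, h̄}_K` of a differential polynomial with a local
functional. -/
noncomputable def pbK (K : Fin N → Fin N → ℕ → DP N) (f : DP N) (h : LF N) : DP N :=
  ofCo fun m => ∑ γ : Fin N, ∑ᶠ n : ℕ,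
    co (pd (Sum.inl (γ, n)) f * dx^[n] (Kap K γ fun μ => vdQ μ h)) m

/-- Being a hamiltonian operator. -/
structure IsHamOp (K : Fin N → Fin N → ℕ → DP N) : Prop where
  finite : ∀ γ ν, ∃ J : ℕ, ∀ j, J ≤ j → K γ ν j = 0
  deg : ∀ (γ ν : Fin N) (j : ℕ), IsHomog (1 - (j : ℤ)) (K γ ν j)
  poly : ∀ γ ν j, IsDiffPoly (K γ ν j)
  antisym : ∀ f g : LF N, lfbK K f g = -lfbK K g f
  jacobi : ∀ f g h : LF N,
    lfbK K (lfbK K f g) h + lfbK K (lfbK K g h) f + lfbK K (lfbK K h f) g = 0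

/-- A hamiltonian hierarchy: a hamiltonian operator together with pairwise
commuting Hamiltonians `h̄_{β,q} ∈ Λ̂^{[0]}_N` such that `h̄_{1,0}` generates the
spatial translations. -/
structure IsHierarchy [NeZero N] (K : Fin N → Fin N → ℕ → DP N)
    (H : Fin N → ℕ → LF N) : Prop where
  ham : IsHamOp K
  mem : ∀ β q, H β q ∈ LFHomog N 0
  comm : ∀ β q γ p, lfbK K (H β q) (H γ p) = 0
  transl : ∀ α, Kap K α (fun μ => vdQ μ (H 0 0)) = uv α 1

/-- A tau-structure for a hamiltonian hierarchy.  Here `h β q` denotes the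
tau-symmetric density `h_{β,q-1}` (an index shift by one). -/
structure IsTauStructure [NeZero N] (K : Fin N → Fin N → ℕ → DP N)
    (H : Fin N → ℕ → LF N) (h : Fin N → ℕ → DP N) : Prop where
  mem : ∀ β q, IsHomog 0 (h β q) ∧ IsDiffPoly (h β q)
  casimir : ∀ β α, Kap K α (fun μ => vdQ μ (intg (h β 0))) = 0
  indep : LinearIndependent ℂ fun β : Fin N => intg (h β 0)
  nondeg : Matrix.det (Matrix.of fun α β : Fin N => co (K α β 1) 0) ≠ 0
  dens : ∀ β q, intg (h β (q + 1)) = H β q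
  tausym : ∀ α β p q, pbK K (h α p) (H β q) = pbK K (h β q) (H α p)

end DP

/-!
The first three claims are formal. Since `δf/δu^μ = ∂f/∂u^μ + ∂_x(…)`, integrating `δ/δu^1` gives
`∂/∂u^1` on local functionals; `δ/δu^ν ∫ θ_{βμ} u^μ dx = θ_{βν}` is a constant, killed by `η∂_x`;
and the coefficients of the linear monomials `u^ν` vanish on constants and total derivatives, so
they read off the rows of `θ` from the `∫ θ_{βμ} u^μ dx`.

Tau-symmetry comes from the identity, valid for a symmetric constant `η`,
`δ/δu^ρ (δf̄/δu^μ η^{μν} ∂_x δḡ/δu^ν) = {δf̄/δu^ρ, ḡ} - {δḡ/δu^ρ, f̄}`,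
whose left side vanishes when `{f̄, ḡ} = 0` because `δ/δu^ρ` kills total derivatives. It follows
from the Leibniz rule for `δ/δu^ρ` and the Helmholtz condition (the linearization of a variational
derivative is self-adjoint)
`Σ_s (-∂_x)^s (∂(δf/δu^μ)/∂u^ρ_s · w) = Σ_t ∂(δf/δu^ρ)/∂u^μ_t · ∂_x^t w`.
Both sides are brought to one normal form with `[∂/∂u^ρ_s, ∂_x] = ∂/∂u^ρ_{s-1}` and the Leibniz
rule for `∂_x^n`; on the left this takes an alternating binomial identity.

Everything is proved coefficientwise: the coefficient at a monomial of jet weight `J` only sees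
`∂_x^n` for `n ≤ J`, so the infinite sums defining `δ/δu^μ` may be truncated.
-/

lemma Finset.sum_range_succ_eq_sum_range_ite {M : Type*} [AddCommMonoid M] {s B : ℕ} (h : s < B)
    (g : ℕ → M) : ∑ q ∈ range (s + 1), g q = ∑ q ∈ range B, if q ≤ s then g q else 0 := by
  rw [← Finset.sum_filter]
  congr 1
  ext q
  simp only [mem_range, mem_filter]
  omega

/-- The left side is `(-1)^i` times the `i`-th forward difference of `x ↦ x.choose b` at `p`. -/
lemma Int.alternating_sum_range_choose_mul_choose_add (i p b : ℕ) :
    ∑ r ∈ Finset.range (i + 1), (-1 : ℤ) ^ r * i.choose r * (p + r).choose b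
      = if i ≤ b then (-1 : ℤ) ^ i * p.choose (b - i) else 0 := by
  have hΔ := fwdDiff_iter_eq_sum_shift (1 : ℕ) (fun x => (x.choose b : ℤ)) i p
  have hsum : ∑ r ∈ Finset.range (i + 1), (-1 : ℤ) ^ r * i.choose r * (p + r).choose b
      = (-1) ^ i * (fwdDiff 1)^[i] (fun x => (x.choose b : ℤ)) p := by
    rw [hΔ, Finset.mul_sum]
    refine Finset.sum_congr rfl fun r hr => ?_
    have hr : r ≤ i := Nat.lt_succ_iff.mp (Finset.mem_range.mp hr)
    rw [smul_eq_mul, smul_eq_mul, mul_one, ← mul_assoc, ← mul_assoc, ← pow_add,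
      show i + (i - r) = r + 2 * (i - r) by omega, pow_add, pow_mul, neg_one_sq, one_pow, mul_one]
  rw [hsum]
  split_ifs with h
  · obtain ⟨j, rfl⟩ := Nat.exists_eq_add_of_le h
    rw [fwdDiff_iter_choose j i, Nat.add_sub_cancel_left]
  · obtain ⟨j, rfl⟩ := Nat.exists_eq_add_of_lt (not_le.mp h)
    have hb := fwdDiff_iter_choose 0 b
    rw [Nat.add_zero] at hb
    rw [show b + j + 1 = j + 1 + b by omega, Function.iterate_add_apply, hb,
      Function.iterate_succ_apply]
    simp [Function.iterate_fixed (fwdDiff_const (1 : ℕ) (0 : ℤ))]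

lemma Int.sum_range_neg_one_pow_mul_choose_mul_choose (p q t S : ℕ) (h : p + q ≤ S) :
    ∑ s ∈ Finset.range (S + 1),
        (if p ≤ s then (-1 : ℤ) ^ (s + q) * q.choose (s - p) * s.choose t else 0)
      = if q ≤ t then (-1 : ℤ) ^ p * p.choose (t - q) else 0 := by
  rw [Finset.range_eq_Ico, ← Finset.sum_Ico_consecutive _ (Nat.zero_le p) (by omega : p ≤ S + 1),
    Finset.sum_eq_zero fun s hs => if_neg (by rw [Finset.mem_Ico] at hs; omega), zero_add,
    Finset.sum_congr rfl fun s hs => if_pos (Finset.mem_Ico.mp hs).1, Finset.sum_Ico_eq_sum_range,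
    ← Finset.sum_subset (Finset.range_subset_range.mpr (by omega : q + 1 ≤ S + 1 - p))
      fun r _ hr => by rw [Nat.choose_eq_zero_of_lt (by rw [Finset.mem_range] at hr; omega)]; simp]
  have hterm : ∀ r, (-1 : ℤ) ^ (p + r + q) * q.choose (p + r - p) * (p + r).choose t
      = (-1) ^ (p + q) * ((-1) ^ r * q.choose r * (p + r).choose t) := fun r => by
    rw [Nat.add_sub_cancel_left, show p + r + q = p + q + r by omega, pow_add]
    ring
  simp only [hterm, ← Finset.mul_sum, Int.alternating_sum_range_choose_mul_choose_add]
  split_ifs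
  · rw [← mul_assoc, ← pow_add, add_assoc, ← two_mul, pow_add, pow_mul, neg_one_sq, one_pow,
      mul_one]
  · rw [mul_zero]

namespace DP

variable {N : ℕ}

open Finset MvPowerSeries

abbrev Mon (N : ℕ) := DVar N →₀ ℕ

section Coefficients

@[simp] lemma co_ofCo (F : Mon N → ℂ) (m : Mon N) : co (ofCo F) m = F m := rfl

lemma ext_co {f g : DP N} (h : ∀ m, co f m = co g m) : f = g := MvPowerSeries.ext h

@[simp] lemma co_add (f g : DP N) (m : Mon N) : co (f + g) m = co f m + co g m := map_add _ _ _

@[simp] lemma co_smul (c : ℂ) (f : DP N) (m : Mon N) : co (c • f) m = c * co f m := by simp [co]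

@[simp] lemma co_sub (f g : DP N) (m : Mon N) : co (f - g) m = co f m - co g m := map_sub _ _ _

@[simp] lemma co_zero (m : Mon N) : co (0 : DP N) m = 0 := map_zero _

@[simp] lemma co_sum {ι : Type*} (s : Finset ι) (F : ι → DP N) (m : Mon N) :
    co (∑ i ∈ s, F i) m = ∑ i ∈ s, co (F i) m := map_sum _ _ _

lemma co_mul (f g : DP N) (m : Mon N) :
    co (f * g) m = ∑ p ∈ antidiagonal m, co f p.1 * co g p.2 := coeff_mul m f g

lemma co_X_mul (v : DVar N) (f : DP N) (m : Mon N) :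
    co (X v * f) m = if m v = 0 then 0 else co f (m - Finsupp.single v 1) := by
  rw [co, X_def, coeff_monomial_mul, one_mul]
  by_cases h : m v = 0 <;> simp [h, Finsupp.single_le_iff, Nat.one_le_iff_ne_zero, co]

end Coefficients

section PartialDerivative

lemma pd_eq_pderiv (v : DVar N) : pd v = ⇑(pderiv ℂ v : Derivation ℂ (DP N) (DP N)) := by
  funext f
  ext m
  rw [coeff_pderiv]
  exact mul_comm _ _

lemma co_pd (v : DVar N) (f : DP N) (m : Mon N) :
    co (pd v f) m = ((m v : ℂ) + 1) * co f (m + Finsupp.single v 1) := rfl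

@[simp] lemma pd_add (v : DVar N) (f g : DP N) : pd v (f + g) = pd v f + pd v g := by
  simp [pd_eq_pderiv]

@[simp] lemma pd_smul (v : DVar N) (c : ℂ) (f : DP N) : pd v (c • f) = c • pd v f := by
  simp [pd_eq_pderiv]

@[simp] lemma pd_sum {ι : Type*} (v : DVar N) (s : Finset ι) (F : ι → DP N) :
    pd v (∑ i ∈ s, F i) = ∑ i ∈ s, pd v (F i) := by
  simp [pd_eq_pderiv]

lemma pd_mul (v : DVar N) (f g : DP N) : pd v (f * g) = pd v f * g + f * pd v g := by
  rw [pd_eq_pderiv, Derivation.leibniz, smul_eq_mul, smul_eq_mul, add_comm, mul_comm g]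

lemma pd_X (v w : DVar N) : pd v (X w : DP N) = if v = w then 1 else 0 := by
  classical
  rw [pd_eq_pderiv, pderiv_X, Pi.single_apply]
  exact if_congr eq_comm rfl rfl

@[simp] lemma pd_one (v : DVar N) : pd v (1 : DP N) = 0 := by
  rw [pd_eq_pderiv, pderiv_one]

lemma pd_comm (v w : DVar N) (f : DP N) : pd v (pd w f) = pd w (pd v f) := by
  apply ext_co; intro m
  simp only [co_pd, Finsupp.add_apply, Finsupp.single_apply]
  rw [add_right_comm m]
  by_cases h : v = w
  · subst h; rfl
  · rw [if_neg h, if_neg (Ne.symm h)]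
    push_cast; ring

end PartialDerivative

section JetWeight

def jetOrder : DVar N → ℕ
  | Sum.inl (_, i) => i
  | Sum.inr _ => 0

noncomputable def jetWeight : Mon N →+ ℕ := Finsupp.weight jetOrder

lemma jetWeight_single (v : DVar N) (k : ℕ) :
    jetWeight (Finsupp.single v k) = k * jetOrder v :=
  Finsupp.weight_single _ _ _

lemma jetWeight_le_of_mem_antidiagonal {a : Mon N × Mon N} {m : Mon N}
    (h : a ∈ antidiagonal m) : jetWeight a.1 ≤ jetWeight m ∧ jetWeight a.2 ≤ jetWeight m := by
  rw [HasAntidiagonal.mem_antidiagonal] at h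
  rw [← h, map_add]
  omega

lemma sub_single_add_single {m : Mon N} {v : DVar N} (h : m v ≠ 0) :
    m - Finsupp.single v 1 + Finsupp.single v 1 = m := by
  ext w
  by_cases hw : v = w
  · subst hw; simp only [Finsupp.add_apply, Finsupp.tsub_apply, Finsupp.single_eq_same]; omega
  · simp [Finsupp.single_eq_of_ne' hw]

end JetWeight

section SpatialDerivative

def succVar (p : Fin N × ℕ) : DVar N := Sum.inl (p.1, p.2 + 1)

lemma succVar_injective : Function.Injective (succVar (N := N)) := by
  rintro ⟨α, i⟩ ⟨β, j⟩ h
  simp only [succVar, Sum.inl.injEq, Prod.mk.injEq, add_left_inj] at h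
  rw [h.1, h.2]

lemma jetWeight_shift {m : Mon N} {p : Fin N × ℕ} (h : m (succVar p) ≠ 0) :
    jetWeight (m - Finsupp.single (succVar p) 1 + Finsupp.single (Sum.inl p) 1) + 1
      = jetWeight m := by
  conv_rhs => rw [← sub_single_add_single h]
  rw [map_add, map_add, jetWeight_single, jetWeight_single]
  simp only [succVar, jetOrder]
  omega

noncomputable def dxSupport (m : Mon N) : Finset (Fin N × ℕ) :=
  m.support.preimage succVar succVar_injective.injOn

lemma mem_dxSupport {m : Mon N} {p : Fin N × ℕ} : p ∈ dxSupport m ↔ m (succVar p) ≠ 0 := by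
  simp [dxSupport]

lemma dxSupport_mono {a m : Mon N} (h : a ≤ m) : dxSupport a ⊆ dxSupport m := fun p hp => by
  rw [mem_dxSupport] at hp ⊢
  have := h (succVar p)
  omega

lemma co_dx (f : DP N) (m : Mon N) :
    co (dx f) m
      = ∑ p ∈ dxSupport m, co (pd (Sum.inl p) f) (m - Finsupp.single (succVar p) 1) := by
  show ∑ v ∈ m.support, _ = _
  rw [dxSupport, ← Finset.sum_preimage succVar m.support succVar_injective.injOn]
  · rfl
  · rintro (⟨α, _ | i⟩ | _) _ hv
    · rfl
    · exact absurd ⟨(α, i), rfl⟩ hv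
    · rfl

/-- The finite truncation `Σ_{p ∈ S} u_{p+1} ∂/∂u_p` of `∂_x`; it is a derivation and it agrees
with `∂_x` at every monomial `m` with `dxSupport m ⊆ S`. -/
noncomputable def dxOn (S : Finset (Fin N × ℕ)) (f : DP N) : DP N :=
  ∑ p ∈ S, X (succVar p) * pd (Sum.inl p) f

lemma co_dx_eq_co_dxOn {S : Finset (Fin N × ℕ)} {m : Mon N} (h : dxSupport m ⊆ S)
    (f : DP N) : co (dx f) m = co (dxOn S f) m := by
  simp only [co_dx, dxOn, co_sum, co_X_mul]
  rw [← Finset.sum_subset h fun p _ hp => if_pos (not_not.mp (mem_dxSupport.not.mp hp))]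
  exact Finset.sum_congr rfl fun p hp => (if_neg (mem_dxSupport.mp hp)).symm

lemma dxOn_mul (S : Finset (Fin N × ℕ)) (f g : DP N) :
    dxOn S (f * g) = dxOn S f * g + f * dxOn S g := by
  simp only [dxOn, pd_mul, mul_add, Finset.sum_add_distrib, Finset.sum_mul, Finset.mul_sum]
  congr 1 <;> refine Finset.sum_congr rfl fun p _ => by ring

lemma dx_add (f g : DP N) : dx (f + g) = dx f + dx g := ext_co fun m => by
  simp only [co_add, co_dx_eq_co_dxOn (subset_refl (dxSupport m)), dxOn, pd_add, mul_add,
    Finset.sum_add_distrib]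

lemma dx_smul (c : ℂ) (f : DP N) : dx (c • f) = c • dx f := ext_co fun m => by
  simp only [co_smul, co_dx_eq_co_dxOn (subset_refl (dxSupport m)), dxOn, pd_smul,
    mul_smul_comm, ← Finset.smul_sum]

lemma dx_mul (f g : DP N) : dx (f * g) = dx f * g + f * dx g := by
  apply ext_co; intro m
  have hsub : ∀ a ∈ antidiagonal m, dxSupport a.1 ⊆ dxSupport m ∧ dxSupport a.2 ⊆ dxSupport m :=
    fun a ha => by
      rw [HasAntidiagonal.mem_antidiagonal] at ha
      exact ⟨dxSupport_mono (ha ▸ le_self_add), dxSupport_mono (ha ▸ le_add_self)⟩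
  rw [co_dx_eq_co_dxOn subset_rfl, dxOn_mul, co_add, co_add, co_mul, co_mul, co_mul, co_mul]
  congr 1 <;> refine Finset.sum_congr rfl fun a ha => ?_
  · rw [co_dx_eq_co_dxOn (hsub a ha).1]
  · rw [co_dx_eq_co_dxOn (hsub a ha).2]

noncomputable def pdPred (ρ : Fin N) : ℕ → DP N → DP N
  | 0 => fun _ => 0
  | s + 1 => pd (Sum.inl (ρ, s))

lemma pd_dxOn (ρ : Fin N) (s : ℕ) {S : Finset (Fin N × ℕ)} (hS : s ≠ 0 → (ρ, s - 1) ∈ S)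
    (f : DP N) :
    pd (Sum.inl (ρ, s)) (dxOn S f) = dxOn S (pd (Sum.inl (ρ, s)) f) + pdPred ρ s f := by
  classical
  simp only [dxOn, pd_sum, pd_mul, pd_X, Finset.sum_add_distrib, pd_comm (Sum.inl (ρ, s))]
  rw [add_comm]
  congr 1
  cases s with
  | zero => exact Finset.sum_eq_zero fun p _ => by simp [succVar]
  | succ k =>
    have hv : ∀ p : Fin N × ℕ, (Sum.inl (ρ, k + 1) = succVar p) ↔ ((ρ, k) = p) :=
      fun p => ⟨fun h => succVar_injective h, fun h => h ▸ rfl⟩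
    simp only [if_congr (hv _) rfl rfl, ite_mul, one_mul, zero_mul, Finset.sum_ite_eq]
    exact if_pos (hS k.succ_ne_zero)

lemma pd_dx (ρ : Fin N) (s : ℕ) (f : DP N) :
    pd (Sum.inl (ρ, s)) (dx f) = dx (pd (Sum.inl (ρ, s)) f) + pdPred ρ s f := by
  apply ext_co; intro m
  set v : DVar N := Sum.inl (ρ, s)
  set S := dxSupport (m + Finsupp.single v 1)
  have hS : s ≠ 0 → (ρ, s - 1) ∈ S := fun hs => by
    rw [mem_dxSupport, show succVar (ρ, s - 1) = v by simp [succVar, v, Nat.sub_add_cancel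
      (Nat.one_le_iff_ne_zero.mpr hs)]]
    simp
  rw [co_pd, co_dx_eq_co_dxOn subset_rfl, ← co_pd, pd_dxOn ρ s hS, co_add, co_add,
    co_dx_eq_co_dxOn (dxSupport_mono le_self_add)]

end SpatialDerivative

section Iterates

noncomputable def dxₗ : DP N →ₗ[ℂ] DP N where
  toFun := dx
  map_add' := dx_add
  map_smul' := dx_smul

lemma dx_iter_eq_pow (n : ℕ) : dx^[n] = ⇑(dxₗ ^ n : Module.End ℂ (DP N)) :=
  (Module.End.coe_pow dxₗ n).symm

@[simp] lemma dx_iter_zero (n : ℕ) : dx^[n] (0 : DP N) = 0 := by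
  rw [dx_iter_eq_pow, map_zero]

lemma dx_iter_add (n : ℕ) (f g : DP N) : dx^[n] (f + g) = dx^[n] f + dx^[n] g := by
  rw [dx_iter_eq_pow, map_add]

lemma dx_iter_sub (n : ℕ) (f g : DP N) : dx^[n] (f - g) = dx^[n] f - dx^[n] g := by
  rw [dx_iter_eq_pow, map_sub]

lemma dx_iter_smul (n : ℕ) (c : ℂ) (f : DP N) : dx^[n] (c • f) = c • dx^[n] f := by
  rw [dx_iter_eq_pow, map_smul]

lemma dx_iter_sum {ι : Type*} (n : ℕ) (s : Finset ι) (F : ι → DP N) :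
    dx^[n] (∑ i ∈ s, F i) = ∑ i ∈ s, dx^[n] (F i) := by
  rw [dx_iter_eq_pow, map_sum]

lemma dx_nsmul (k : ℕ) (f : DP N) : dx (k • f) = k • dx f :=
  map_nsmul dxₗ k f

lemma dx_sum {ι : Type*} (s : Finset ι) (F : ι → DP N) : dx (∑ i ∈ s, F i) = ∑ i ∈ s, dx (F i) :=
  dx_iter_sum 1 s F

lemma dx_one : dx (1 : DP N) = 0 :=
  ext_co fun m => by simp [co_dx]

lemma co_dx_iter_eq_zero {n : ℕ} (f : DP N) {m : Mon N} (h : jetWeight m < n) :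
    co (dx^[n] f) m = 0 := by
  induction n generalizing f m with
  | zero => omega
  | succ k ih =>
    rw [Function.iterate_succ_apply', co_dx]
    refine Finset.sum_eq_zero fun p hp => ?_
    have := jetWeight_shift (mem_dxSupport.mp hp)
    rw [co_pd, ih _ (by omega), mul_zero]

lemma co_mul_dx_iter_eq_zero (a b : DP N) {n : ℕ} {m : Mon N} (h : jetWeight m < n) :
    co (a * dx^[n] b) m = 0 := by
  rw [co_mul]
  refine Finset.sum_eq_zero fun q hq => ?_
  rw [co_dx_iter_eq_zero b ((jetWeight_le_of_mem_antidiagonal hq).2.trans_lt h), mul_zero]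

lemma co_dx_iter_mul_eq_zero (a b : DP N) {n : ℕ} {m : Mon N} (h : jetWeight m < n) :
    co (dx^[n] a * b) m = 0 := by
  rw [mul_comm]
  exact co_mul_dx_iter_eq_zero b a h

end Iterates

section Truncation

def EqUpTo (K : ℕ) (a b : DP N) : Prop := ∀ m : Mon N, jetWeight m ≤ K → co a m = co b m

namespace EqUpTo

variable {K : ℕ} {a b : DP N}

lemma dx (h : EqUpTo K a b) : EqUpTo K (DP.dx a) (DP.dx b) := fun m hm => by
  rw [co_dx, co_dx]
  refine Finset.sum_congr rfl fun p hp => ?_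
  have := jetWeight_shift (mem_dxSupport.mp hp)
  rw [co_pd, co_pd, h _ (by omega)]

lemma dx_iter (h : EqUpTo K a b) (n : ℕ) : EqUpTo K (DP.dx^[n] a) (DP.dx^[n] b) := by
  induction n with
  | zero => exact h
  | succ k ih =>
    rw [Function.iterate_succ_apply', Function.iterate_succ_apply']
    exact ih.dx

lemma mul_right (h : EqUpTo K a b) (w : DP N) : EqUpTo K (a * w) (b * w) := fun m hm => by
  rw [co_mul, co_mul]
  refine Finset.sum_congr rfl fun q hq => ?_
  rw [h q.1 ((jetWeight_le_of_mem_antidiagonal hq).1.trans hm)]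

lemma pd (h : EqUpTo K a b) (ρ : Fin N) {s K' : ℕ} (hK : K' + s ≤ K) :
    EqUpTo K' (DP.pd (Sum.inl (ρ, s)) a) (DP.pd (Sum.inl (ρ, s)) b) := fun m hm => by
  rw [co_pd, co_pd, h]
  rw [map_add, jetWeight_single]
  simp only [jetOrder]
  omega

end EqUpTo

end Truncation

section VariationalDerivative

noncomputable def vdTrunc (μ : Fin N) (T : ℕ) (f : DP N) : DP N :=
  ∑ i ∈ range (T + 1), (-1 : ℂ) ^ i • dx^[i] (pd (Sum.inl (μ, i)) f)

lemma vd_eqUpTo_vdTrunc {K T : ℕ} (hKT : K ≤ T) (μ : Fin N) (f : DP N) :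
    EqUpTo K (vd μ f) (vdTrunc μ T f) := fun m hm => by
  simp only [vdTrunc, co_sum, co_smul]
  refine finsum_eq_sum_of_support_subset _ fun i hi => ?_
  by_contra hT
  rw [coe_range, Set.mem_Iio, not_lt] at hT
  exact hi (by simp only; rw [co_dx_iter_eq_zero _ (by omega), mul_zero])

lemma vd_add (μ : Fin N) (f g : DP N) : vd μ (f + g) = vd μ f + vd μ g :=
  ext_co fun m => by
    simp only [co_add, vd_eqUpTo_vdTrunc le_rfl μ _ m le_rfl, vdTrunc, pd_add, dx_iter_add,
      smul_add, Finset.sum_add_distrib]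

lemma vd_smul (μ : Fin N) (c : ℂ) (f : DP N) : vd μ (c • f) = c • vd μ f :=
  ext_co fun m => by
    simp only [co_smul, vd_eqUpTo_vdTrunc le_rfl μ _ m le_rfl, vdTrunc, pd_smul, dx_iter_smul,
      smul_comm _ c, ← Finset.smul_sum]

noncomputable def vdₗ (μ : Fin N) : DP N →ₗ[ℂ] DP N where
  toFun := vd μ
  map_add' := vd_add μ
  map_smul' := vd_smul μ

lemma vd_sum {ι : Type*} (μ : Fin N) (s : Finset ι) (F : ι → DP N) :
    vd μ (∑ i ∈ s, F i) = ∑ i ∈ s, vd μ (F i) :=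
  map_sum (vdₗ μ) F s

lemma vdTrunc_dx (μ : Fin N) (T : ℕ) (f : DP N) :
    vdTrunc μ T (dx f) = (-1 : ℂ) ^ T • dx^[T + 1] (pd (Sum.inl (μ, T)) f) := by
  induction T with
  | zero => simp [vdTrunc, pd_dx, pdPred]
  | succ T ih =>
    rw [vdTrunc, Finset.sum_range_succ, ← vdTrunc, ih, pd_dx, pdPred, dx_iter_add,
      ← Function.iterate_succ_apply, pow_succ, mul_neg_one, neg_smul, smul_add, neg_add,
      add_add_neg_cancel'_right, neg_smul]

lemma vd_dx (μ : Fin N) (f : DP N) : vd μ (dx f) = 0 :=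
  ext_co fun m => by
    rw [vd_eqUpTo_vdTrunc le_rfl μ _ m le_rfl, vdTrunc_dx, co_smul,
      co_dx_iter_eq_zero _ (Nat.lt_succ_self _), mul_zero, co_zero]

lemma pd_eq_zero_of_isConst {f : DP N} (h : IsConst f) (p : Fin N × ℕ) :
    pd (Sum.inl p) f = 0 := ext_co fun m => by
  rw [co_pd, co_zero]
  by_contra hne
  have := h _ (right_ne_zero_of_mul hne) (Sum.inl p) (by simp)
  exact Sum.inl_ne_inr this

lemma vd_eq_zero_of_isConst {f : DP N} (h : IsConst f) (μ : Fin N) : vd μ f = 0 :=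
  ext_co fun m => by
    simp [vd_eqUpTo_vdTrunc le_rfl μ _ m le_rfl, vdTrunc, pd_eq_zero_of_isConst h]

lemma vd_eq_zero_of_mem_lfSub {x : DP N} (hx : x ∈ lfSub N) (μ : Fin N) : vd μ x = 0 := by
  have hle : lfSub N ≤ LinearMap.ker (vdₗ μ) := by
    refine sup_le (fun f hf => vd_eq_zero_of_isConst hf μ) ?_
    rw [Submodule.span_le]
    rintro _ ⟨g, rfl⟩
    exact vd_dx μ g
  exact hle hx

lemma intg_rep (h : LF N) : intg (rep h) = h :=
  (Submodule.Quotient.mk_surjective (lfSub N) h).choose_spec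

lemma intg_eq_zero_iff {f : DP N} : intg f = 0 ↔ f ∈ lfSub N :=
  Submodule.Quotient.mk_eq_zero _

lemma vdQ_intg (μ : Fin N) (f : DP N) : vdQ μ (intg f) = vd μ f := by
  have hmem : rep (intg f) - f ∈ lfSub N := by
    rw [← intg_eq_zero_iff, map_sub, intg_rep, sub_self]
  rw [vdQ, ← sub_add_cancel (rep (intg f)) f, vd_add, vd_eq_zero_of_mem_lfSub hmem, zero_add]

lemma intg_dx (f : DP N) : intg (dx f) = 0 :=
  intg_eq_zero_iff.mpr (le_sup_right (α := Submodule ℂ (DP N)) (Submodule.subset_span ⟨f, rfl⟩))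

noncomputable def vdTailTrunc (μ : Fin N) (T : ℕ) (f : DP N) : DP N :=
  ∑ i ∈ range (T + 1), (-1 : ℂ) ^ (i + 1) • dx^[i] (pd (Sum.inl (μ, i + 1)) f)

/-- `Σ_{i ≥ 0} (-1)^{i+1} ∂_x^i ∂f/∂u^μ_{i+1}`, so that `δf/δu^μ = ∂f/∂u^μ + ∂_x (vdTail μ f)`. -/
noncomputable def vdTail (μ : Fin N) (f : DP N) : DP N :=
  ofCo fun m => co (vdTailTrunc μ (jetWeight m) f) m

lemma vdTail_eqUpTo_vdTailTrunc (μ : Fin N) (T : ℕ) (f : DP N) :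
    EqUpTo T (vdTail μ f) (vdTailTrunc μ T f) := fun m hm => by
  simp only [vdTail, co_ofCo, vdTailTrunc, co_sum, co_smul]
  refine Finset.sum_subset (range_subset_range.mpr (by omega)) fun i _ hi => ?_
  rw [mem_range, not_lt] at hi
  rw [co_dx_iter_eq_zero _ (by omega), mul_zero]

lemma vdTrunc_succ (μ : Fin N) (T : ℕ) (f : DP N) :
    vdTrunc μ (T + 1) f = pd (Sum.inl (μ, 0)) f + dx (vdTailTrunc μ T f) := by
  rw [vdTrunc, Finset.sum_range_succ', vdTailTrunc, dx_sum, add_comm]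
  simp only [dx_smul, ← Function.iterate_succ_apply' dx]
  simp

lemma vd_eq_pd_add_dx (μ : Fin N) (f : DP N) :
    vd μ f = pd (Sum.inl (μ, 0)) f + dx (vdTail μ f) :=
  ext_co fun m => by
    rw [vd_eqUpTo_vdTrunc (Nat.le_succ _) μ f m le_rfl, vdTrunc_succ, co_add, co_add,
      (vdTail_eqUpTo_vdTailTrunc μ (jetWeight m) f).dx m le_rfl]

lemma intg_vd (μ : Fin N) (f : DP N) : intg (vd μ f) = intg (pd (Sum.inl (μ, 0)) f) := by
  rw [vd_eq_pd_add_dx, map_add, intg_dx, add_zero]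

lemma intg_vdQ (μ : Fin N) (h : LF N) : intg (vdQ μ h) = pdQ (Sum.inl (μ, 0)) h :=
  intg_vd μ (rep h)

end VariationalDerivative

section IteratedLeibniz

lemma choose_smul_dx_iter_sub_succ (n k : ℕ) (f : DP N) :
    ((n.choose k : ℕ) : ℂ) • dx (dx^[n - k] f) = ((n.choose k : ℕ) : ℂ) • dx^[n + 1 - k] f := by
  rcases le_or_gt k n with hk | hk
  · rw [← Function.iterate_succ_apply' dx, Nat.succ_eq_add_one, Nat.sub_add_comm hk]
  · rw [Nat.choose_eq_zero_of_lt hk, Nat.cast_zero, zero_smul, zero_smul]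

lemma pd_dx_iter (ρ : Fin N) (n s : ℕ) (f : DP N) :
    pd (Sum.inl (ρ, s)) (dx^[n] f)
      = ∑ q ∈ range (s + 1),
          ((n.choose (s - q) : ℕ) : ℂ) • dx^[n - (s - q)] (pd (Sum.inl (ρ, q)) f) := by
  induction n generalizing s with
  | zero =>
    rw [Finset.sum_range_succ, Finset.sum_eq_zero fun q hq => by
      rw [Nat.choose_eq_zero_of_lt (by rw [mem_range] at hq; omega), Nat.cast_zero, zero_smul]]
    simp
  | succ n ih =>
    rw [Function.iterate_succ_apply', pd_dx, ih, dx_sum]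
    simp only [dx_smul, choose_smul_dx_iter_sub_succ]
    cases s with
    | zero => simp [pdPred]
    | succ s =>
      rw [pdPred, ih, Finset.sum_range_succ, Finset.sum_range_succ _ (s + 1), add_right_comm,
        ← Finset.sum_add_distrib]
      congr 1
      · refine Finset.sum_congr rfl fun q hq => ?_
        have hq : q ≤ s := Nat.lt_succ_iff.mp (mem_range.mp hq)
        rw [show s + 1 - q = s - q + 1 by omega, Nat.choose_succ_succ', Nat.cast_add, add_smul,
          add_comm, show n - (s - q) = n + 1 - (s - q + 1) by omega]
      · simp

lemma dx_iter_mul (n : ℕ) (f g : DP N) :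
    dx^[n] (f * g) = ∑ t ∈ range (n + 1), ((n.choose t : ℕ) : ℂ) • (dx^[n - t] f * dx^[t] g) := by
  simp only [Nat.cast_smul_eq_nsmul]
  induction n with
  | zero => simp
  | succ n ih =>
    rw [Finset.sum_choose_succ_nsmul (fun t j => dx^[j] f * dx^[t] g), Function.iterate_succ_apply',
      ih, dx_sum, ← Finset.sum_add_distrib]
    refine Finset.sum_congr rfl fun t ht => ?_
    rw [dx_nsmul, ← nsmul_add, dx_mul, ← Function.iterate_succ_apply' dx,
      ← Function.iterate_succ_apply' dx, Nat.succ_eq_add_one, Nat.sub_add_comm (Nat.lt_succ_iff.mp (mem_range.mp ht))]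

end IteratedLeibniz

section Helmholtz

variable (ρ μ : Fin N) (f w : DP N)

noncomputable def helmholtzTerm (p q t : ℕ) : DP N :=
  dx^[p + q - t] (pd (Sum.inl (ρ, p)) (pd (Sum.inl (μ, q)) f)) * dx^[t] w

def helmholtzCoeff (p q t : ℕ) : ℤ := if q ≤ t then (-1) ^ p * p.choose (t - q) else 0

noncomputable def helmholtzSum (m : Mon N) (B : ℕ) : ℂ :=
  ∑ p ∈ range B, ∑ q ∈ range B, ∑ t ∈ range B,
    (helmholtzCoeff p q t : ℂ) * co (helmholtzTerm ρ μ f w p q t) m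

variable {ρ μ f w}

lemma co_helmholtzTerm_eq_zero {m : Mon N} {p q t : ℕ}
    (h : jetWeight m < t ∨ jetWeight m < p + q - t) : co (helmholtzTerm ρ μ f w p q t) m = 0 := by
  rcases h with h | h
  · exact co_mul_dx_iter_eq_zero _ _ h
  · exact co_dx_iter_mul_eq_zero _ _ h

variable (ρ μ f w)

lemma co_pd_vdTrunc_mul_dx_iter {T t : ℕ} (ht : t ≤ T) (m : Mon N) :
    co (pd (Sum.inl (μ, t)) (vdTrunc ρ T f) * dx^[t] w) m
      = ∑ p ∈ range (T + 1), ∑ q ∈ range (T + 1),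
          (helmholtzCoeff p q t : ℂ) * co (helmholtzTerm ρ μ f w p q t) m := by
  simp only [vdTrunc, pd_sum, pd_smul, pd_dx_iter, Finset.sum_mul, smul_mul_assoc, co_sum,
    co_smul]
  refine Finset.sum_congr rfl fun p _ => ?_
  rw [Finset.mul_sum, sum_range_succ_eq_sum_range_ite (Nat.lt_succ_of_le ht)]
  refine Finset.sum_congr rfl fun q _ => ?_
  rw [helmholtzCoeff]
  split_ifs with hq
  · rw [helmholtzTerm, pd_comm, show p - (t - q) = p + q - t by omega]
    push_cast
    ring
  · simp

lemma co_dx_iter_pd_vdTrunc_mul {T s : ℕ} (hs : s ≤ T) (m : Mon N) :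
    (-1 : ℂ) ^ s * co (dx^[s] (pd (Sum.inl (ρ, s)) (vdTrunc μ T f) * w)) m
      = ∑ q ∈ range (T + 1), ∑ p ∈ range (T + 1), ∑ t ∈ range (T + 1),
          ((if p ≤ s then (-1 : ℤ) ^ (s + q) * q.choose (s - p) * s.choose t else 0 : ℤ) : ℂ)
            * co (helmholtzTerm ρ μ f w p q t) m := by
  simp only [vdTrunc, pd_sum, pd_smul, pd_dx_iter, Finset.sum_mul, smul_mul_assoc, dx_iter_sum,
    dx_iter_smul, dx_iter_mul, ← Function.iterate_add_apply, co_sum, co_smul, Finset.mul_sum]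
  refine Finset.sum_congr rfl fun q _ => ?_
  rw [sum_range_succ_eq_sum_range_ite (Nat.lt_succ_of_le hs)]
  refine Finset.sum_congr rfl fun p _ => ?_
  split_ifs with hp
  · rw [← Finset.sum_subset (range_subset_range.mpr (by omega : s + 1 ≤ T + 1)) fun t _ ht => by
      rw [Nat.choose_eq_zero_of_lt (n := s) (k := t) (by rw [mem_range] at ht; omega)]; simp]
    refine Finset.sum_congr rfl fun t ht => ?_
    have ht : t ≤ s := Nat.lt_succ_iff.mp (mem_range.mp ht)
    rcases le_or_gt (s - p) q with hq | hq
    · rw [helmholtzTerm, show s - t + (q - (s - p)) = p + q - t by omega]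
      push_cast
      ring
    · rw [Nat.choose_eq_zero_of_lt hq]
      simp
  · simp

lemma sum_co_pd_vd_mul_dx_iter_eq_helmholtzSum (m : Mon N) :
    ∑ t ∈ range (jetWeight m + 1), co (pd (Sum.inl (μ, t)) (vd ρ f) * dx^[t] w) m
      = helmholtzSum ρ μ f w m (3 * jetWeight m + 2) := by
  set D := jetWeight m
  set T := 3 * D + 1
  calc _ = ∑ t ∈ range (D + 1), co (pd (Sum.inl (μ, t)) (vdTrunc ρ T f) * dx^[t] w) m :=
        Finset.sum_congr rfl fun t ht =>
          (((vd_eqUpTo_vdTrunc (K := T) le_rfl ρ f).pd μ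
            (by rw [mem_range] at ht; omega)).mul_right _) m le_rfl
    _ = ∑ t ∈ range (T + 1), co (pd (Sum.inl (μ, t)) (vdTrunc ρ T f) * dx^[t] w) m :=
        Finset.sum_subset (range_subset_range.mpr (by omega)) fun t _ ht =>
          co_mul_dx_iter_eq_zero _ _ (by rw [mem_range] at ht; omega)
    _ = ∑ t ∈ range (T + 1), ∑ p ∈ range (T + 1), ∑ q ∈ range (T + 1),
          (helmholtzCoeff p q t : ℂ) * co (helmholtzTerm ρ μ f w p q t) m :=
        Finset.sum_congr rfl fun t ht =>
          co_pd_vdTrunc_mul_dx_iter ρ μ f w (Nat.lt_succ_iff.mp (mem_range.mp ht)) m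
    _ = _ := by
      rw [helmholtzSum, Finset.sum_comm]
      exact Finset.sum_congr rfl fun p _ => Finset.sum_comm

lemma sum_co_dx_iter_pd_vd_mul_eq_helmholtzSum (m : Mon N) :
    ∑ s ∈ range (jetWeight m + 1),
        (-1 : ℂ) ^ s * co (dx^[s] (pd (Sum.inl (ρ, s)) (vd μ f) * w)) m
      = helmholtzSum ρ μ f w m (3 * jetWeight m + 2) := by
  set D := jetWeight m
  set T := 3 * D + 1
  -- `s ≤ 2D` reaches every `p + q` for which `helmholtzTerm p q t` can be nonzero at `m`, and
  -- `D + s ≤ T` makes the truncation of `δ/δu^μ` invisible after `∂/∂u^ρ_s`.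
  calc _ = ∑ s ∈ range (2 * D + 1),
          (-1 : ℂ) ^ s * co (dx^[s] (pd (Sum.inl (ρ, s)) (vd μ f) * w)) m :=
        Finset.sum_subset (range_subset_range.mpr (by omega)) fun s _ hs => by
          rw [co_dx_iter_eq_zero _ (by rw [mem_range] at hs; omega), mul_zero]
    _ = ∑ s ∈ range (2 * D + 1),
          (-1 : ℂ) ^ s * co (dx^[s] (pd (Sum.inl (ρ, s)) (vdTrunc μ T f) * w)) m :=
        Finset.sum_congr rfl fun s hs => by
          rw [((((vd_eqUpTo_vdTrunc (K := T) le_rfl μ f).pd ρ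
            (by rw [mem_range] at hs; omega)).mul_right w).dx_iter s) m le_rfl]
    _ = ∑ s ∈ range (2 * D + 1), ∑ q ∈ range (T + 1), ∑ p ∈ range (T + 1),
          ∑ t ∈ range (T + 1),
            ((if p ≤ s then (-1 : ℤ) ^ (s + q) * q.choose (s - p) * s.choose t else 0 : ℤ) : ℂ)
              * co (helmholtzTerm ρ μ f w p q t) m :=
        Finset.sum_congr rfl fun s hs =>
          co_dx_iter_pd_vdTrunc_mul ρ μ f w (by rw [mem_range] at hs; omega) m
    _ = ∑ p ∈ range (T + 1), ∑ q ∈ range (T + 1), ∑ t ∈ range (T + 1),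
          (∑ s ∈ range (2 * D + 1),
            ((if p ≤ s then (-1 : ℤ) ^ (s + q) * q.choose (s - p) * s.choose t else 0 : ℤ) : ℂ))
              * co (helmholtzTerm ρ μ f w p q t) m := by
      simp only [Finset.sum_mul]
      rw [Finset.sum_comm]
      simp only [Finset.sum_comm (s := range (2 * D + 1))]
      exact Finset.sum_comm
    _ = _ := by
      refine Finset.sum_congr rfl fun p _ => Finset.sum_congr rfl fun q _ =>
        Finset.sum_congr rfl fun t _ => ?_
      by_cases hpq : p + q ≤ 2 * D
      · rw [← Int.cast_sum, Int.sum_range_neg_one_pow_mul_choose_mul_choose p q t _ hpq,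
          helmholtzCoeff]
      · rw [co_helmholtzTerm_eq_zero (by omega), mul_zero, mul_zero]

theorem helmholtz (m : Mon N) :
    ∑ s ∈ range (jetWeight m + 1),
        (-1 : ℂ) ^ s * co (dx^[s] (pd (Sum.inl (ρ, s)) (vd μ f) * w)) m
      = ∑ t ∈ range (jetWeight m + 1), co (pd (Sum.inl (μ, t)) (vd ρ f) * dx^[t] w) m := by
  rw [sum_co_dx_iter_pd_vd_mul_eq_helmholtzSum, sum_co_pd_vd_mul_dx_iter_eq_helmholtzSum]

end Helmholtz

section Bracket

/-- The coefficient at `m` of `Σ_n ∂c/∂u^γ_n ∂_x^n g`, the linearization of `c` along `g` in the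
component `u^γ`. -/
noncomputable def coLinearization (γ : Fin N) (c g : DP N) (m : Mon N) : ℂ :=
  ∑ n ∈ range (jetWeight m + 1), co (pd (Sum.inl (γ, n)) c * dx^[n] g) m

lemma vdTrunc_mul (ρ : Fin N) (T : ℕ) (a b : DP N) :
    vdTrunc ρ T (a * b)
      = ∑ s ∈ range (T + 1), (-1 : ℂ) ^ s • dx^[s] (pd (Sum.inl (ρ, s)) a * b)
        + ∑ s ∈ range (T + 1), (-1 : ℂ) ^ s • dx^[s] (a * pd (Sum.inl (ρ, s)) b) := by
  simp only [vdTrunc, pd_mul, dx_iter_add, smul_add, Finset.sum_add_distrib]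

/-- Integration by parts, termwise; the boundary term has no monomials of jet weight `≤ S`. -/
lemma sum_dx_iter_mul_pd_dx (ρ : Fin N) (S : ℕ) (a c : DP N) :
    ∑ s ∈ range (S + 1), (-1 : ℂ) ^ s • dx^[s] (a * pd (Sum.inl (ρ, s)) (dx c))
      = (-1 : ℂ) ^ S • dx^[S + 1] (a * pd (Sum.inl (ρ, S)) c)
        - ∑ s ∈ range (S + 1), (-1 : ℂ) ^ s • dx^[s] (pd (Sum.inl (ρ, s)) c * dx a) := by
  have hmove : ∀ s, a * pd (Sum.inl (ρ, s)) (dx c)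
      = dx (a * pd (Sum.inl (ρ, s)) c) - pd (Sum.inl (ρ, s)) c * dx a
        + a * pdPred ρ s c := fun s => by
    rw [pd_dx, dx_mul]
    ring
  induction S with
  | zero => simp [hmove, pdPred, dx_iter_add]
  | succ S ih =>
    rw [Finset.sum_range_succ (fun s => (-1 : ℂ) ^ s • dx^[s] (a * pd (Sum.inl (ρ, s)) (dx c))),
      ih, Finset.sum_range_succ (fun s => (-1 : ℂ) ^ s • dx^[s] (pd (Sum.inl (ρ, s)) c * dx a))
        (S + 1),
      hmove, pdPred, dx_iter_add, dx_iter_sub, ← Function.iterate_succ_apply, pow_succ]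
    simp only [mul_neg_one, neg_smul, smul_add, smul_sub]
    abel

lemma co_vd_mul_dx (ρ : Fin N) (a c : DP N) (m : Mon N) :
    co (vd ρ (a * dx c)) m
      = ∑ s ∈ range (jetWeight m + 1),
          (-1 : ℂ) ^ s * co (dx^[s] (pd (Sum.inl (ρ, s)) a * dx c)) m
        - ∑ s ∈ range (jetWeight m + 1),
            (-1 : ℂ) ^ s * co (dx^[s] (pd (Sum.inl (ρ, s)) c * dx a)) m := by
  rw [vd_eqUpTo_vdTrunc le_rfl ρ _ m le_rfl, vdTrunc_mul, sum_dx_iter_mul_pd_dx]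
  simp only [co_add, co_sub, co_sum, co_smul]
  rw [co_dx_iter_eq_zero _ (Nat.lt_succ_self _), mul_zero, zero_sub, ← sub_eq_add_neg]

lemma co_vd_vd_mul_dx_vd (ρ μ ν : Fin N) (F G : DP N) (m : Mon N) :
    co (vd ρ (vd μ F * dx (vd ν G))) m
      = coLinearization μ (vd ρ F) (dx (vd ν G)) m
        - coLinearization ν (vd ρ G) (dx (vd μ F)) m := by
  rw [co_vd_mul_dx, helmholtz, helmholtz, coLinearization, coLinearization]

lemma co_pbEta (η : Matrix (Fin N) (Fin N) ℂ) (c : DP N) (h : LF N) (m : Mon N) :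
    co (pbEta η c h) m
      = ∑ γ, ∑ ν, η γ ν * coLinearization γ c (dx (vdQ ν h)) m := by
  show ∑ γ, ∑ᶠ n : ℕ, co (pd (Sum.inl (γ, n)) c * dx^[n] (etaAp η γ fun μ => vdQ μ h)) m = _
  refine Finset.sum_congr rfl fun γ _ => ?_
  rw [finsum_eq_sum_of_support_subset (s := range (jetWeight m + 1)) _ fun n hn => by
    by_contra hm
    rw [coe_range, Set.mem_Iio, not_lt] at hm
    exact hn (co_mul_dx_iter_eq_zero _ _ (by omega))]
  simp only [coLinearization, etaAp, dx_iter_sum, dx_iter_smul, mul_smul_comm, Finset.mul_sum,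
    co_sum, co_smul]
  exact Finset.sum_comm

theorem pbEta_vdQ_comm_of_lfbEta_eq_zero {η : Matrix (Fin N) (Fin N) ℂ} (hη : η.IsSymm)
    (ρ : Fin N) {f g : LF N} (hfg : lfbEta η f g = 0) :
    pbEta η (vdQ ρ f) g = pbEta η (vdQ ρ g) f := by
  apply ext_co; intro m
  have hvd : vd ρ (∑ μ, ∑ ν, η μ ν • (vd μ (rep f) * dx (vd ν (rep g)))) = 0 := by
    have := vd_eq_zero_of_mem_lfSub (intg_eq_zero_iff.mp hfg) ρ
    simpa only [etaAp, Finset.mul_sum, mul_smul_comm, vdQ] using this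
  have hco := congrArg (co · m) hvd
  simp only [vd_sum, vd_smul, co_sum, co_smul, co_zero, co_vd_vd_mul_dx_vd, mul_sub,
    Finset.sum_sub_distrib] at hco
  rw [co_pbEta, co_pbEta, ← sub_eq_zero, ← hco]
  simp only [vdQ]
  rw [Finset.sum_comm (f := fun μ ν =>
    η μ ν * coLinearization ν (vd ρ (rep g)) (dx (vd μ (rep f))) m)]
  simp only [hη.apply]

end Bracket

section LinearFunctionals

lemma vd_uv_zero (ν μ : Fin N) : vd ν (uv μ 0) = if ν = μ then 1 else 0 :=
  ext_co fun m => by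
    rw [vd_eqUpTo_vdTrunc le_rfl ν _ m le_rfl, vdTrunc, Finset.sum_range_succ', co_add,
      co_sum, Finset.sum_eq_zero fun i _ => by simp [uv, pd_X]]
    by_cases h : ν = μ <;> simp [uv, pd_X, h]

lemma etaAp_vd_linear (η : Matrix (Fin N) (Fin N) ℂ) (α : Fin N) (c : Fin N → ℂ) :
    etaAp η α (fun ν => vd ν (∑ μ, c μ • uv μ 0)) = 0 := by
  simp [etaAp, vd_sum, vd_smul, vd_uv_zero, dx_smul, dx_one]

noncomputable def linCoeff (ν : Fin N) : DP N →ₗ[ℂ] ℂ :=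
  coeff (Finsupp.single (Sum.inl (ν, 0)) 1)

lemma linCoeff_dx (ν : Fin N) (g : DP N) : linCoeff ν (dx g) = 0 := by
  refine (co_dx g _).trans (Finset.sum_eq_zero fun p hp => ?_)
  rw [mem_dxSupport, Finsupp.single_apply, if_neg (by simp [succVar])] at hp
  exact absurd rfl hp

lemma lfSub_le_ker_linCoeff (ν : Fin N) : lfSub N ≤ LinearMap.ker (linCoeff ν) := by
  refine sup_le (fun f hf => ?_) ?_
  · by_contra hne
    exact Sum.inl_ne_inr (hf _ hne (Sum.inl (ν, 0)) (by simp))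
  · rw [Submodule.span_le]
    rintro _ ⟨g, rfl⟩
    exact linCoeff_dx ν g

noncomputable def linCoeffQ : LF N →ₗ[ℂ] Fin N → ℂ :=
  (lfSub N).liftQ (LinearMap.pi linCoeff) fun _ hf =>
    LinearMap.mem_ker.mpr (funext fun ν => lfSub_le_ker_linCoeff ν hf)

lemma linCoeffQ_intg_linear (c : Fin N → ℂ) : linCoeffQ (intg (∑ μ, c μ • uv μ 0)) = c := by
  funext ν
  simp [linCoeffQ, intg, linCoeff, uv, coeff_X, Finsupp.single_left_inj one_ne_zero]

lemma linearIndependent_intg_linear {θ : Matrix (Fin N) (Fin N) ℂ} (hθ : IsUnit θ.det) :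
    LinearIndependent ℂ fun β => intg (∑ μ, θ β μ • uv μ 0) :=
  LinearIndependent.of_comp linCoeffQ <| by
    simpa only [Function.comp_def, linCoeffQ_intg_linear] using
      Matrix.linearIndependent_rows_of_det_ne_zero hθ.ne_zero

end LinearFunctionals

end DP

open DP in
theorem statement0_general (N : ℕ) [NeZero N] (η : Matrix (Fin N) (Fin N) ℂ)
    (hsym : η.IsSymm)
    (H : Fin N → ℕ → LF N)
    (hcomm : ∀ β q γ p, lfbEta η (H β q) (H γ p) = 0)
    (θ : Matrix (Fin N) (Fin N) ℂ) (hθ : IsUnit θ.det)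
    (hd1 : ∀ β q, pdQ (Sum.inl (0, 0)) (H β (q + 1)) = H β q)
    (hd0 : ∀ β, pdQ (Sum.inl (0, 0)) (H β 0) = intg (∑ μ : Fin N, θ β μ • uv μ 0))
    (h : Fin N → ℕ → DP N) (hdef : ∀ β q, h β q = vdQ 0 (H β q)) :
    (∀ β, intg (h β 0) = intg (∑ μ : Fin N, θ β μ • uv μ 0)) ∧
    (∀ β α, etaAp η α (fun μ => vdQ μ (intg (h β 0))) = 0) ∧
    (LinearIndependent ℂ fun β : Fin N => intg (h β 0)) ∧
    (∀ β q, intg (h β (q + 1)) = H β q) ∧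
    (∀ α β p q, pbEta η (h α p) (H β q) = pbEta η (h β q) (H α p)) := by
  have hlin : ∀ β, intg (h β 0) = intg (∑ μ : Fin N, θ β μ • uv μ 0) := fun β => by
    rw [hdef, intg_vdQ, hd0]
  refine ⟨hlin, fun β α => ?_, ?_, fun β q => ?_, fun α β p q => ?_⟩
  · simp only [hlin β, vdQ_intg]
    exact etaAp_vd_linear η α (θ β)
  · simpa only [hlin] using linearIndependent_intg_linear hθ
  · rw [hdef, intg_vdQ, hd1]
  · rw [hdef, hdef]
    exact pbEta_vdQ_comm_of_lfbEta_eq_zero hsym 0 (hcomm α p β q)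

open DP in
/-- Proposition: sufficient condition for a tau-structure.
`η` is a symmetric nondegenerate matrix, `K = η∂_x`; the `H β q` are the
pairwise commuting Hamiltonians `h̄_{β,q} ∈ Λ̂^{[0]}_N`, `h̄_{1,0}` generates
spatial translations, `∂h̄_{β,q}/∂u^1 = h̄_{β,q−1}` for `q ≥ 1` and
`∂h̄_{β,0}/∂u^1 = ∫ θ_{βμ} u^μ dx` for a nondegenerate matrix `θ`.  Then the
densities `h_{β,q} := δh̄_{β,q+1}/δu^1` (here `h β q` stands for `h_{β,q−1}`)
define a tau-structure: the `∫ h_{β,−1} dx = ∫ θ_{βμ}u^μ dx` are `N` linearly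
independent Casimirs, `∫ h_{β,q} dx = h̄_{β,q}` for `q ≥ 0`, and the
tau-symmetry `{h_{α,p−1}, h̄_{β,q}} = {h_{β,q−1}, h̄_{α,p}}` holds. -/
theorem statement0 (N : ℕ) [NeZero N] (η : Matrix (Fin N) (Fin N) ℂ)
    (hsym : η.IsSymm) (hnd : IsUnit η.det)
    (H : Fin N → ℕ → LF N)
    (hmem : ∀ β q, H β q ∈ LFHomog N 0)
    (hcomm : ∀ β q γ p, lfbEta η (H β q) (H γ p) = 0)
    (htransl : ∀ α : Fin N, etaAp η α (fun μ => vdQ μ (H 0 0)) = uv α 1)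
    (θ : Matrix (Fin N) (Fin N) ℂ) (hθ : IsUnit θ.det)
    (hd1 : ∀ β q, pdQ (Sum.inl (0, 0)) (H β (q + 1)) = H β q)
    (hd0 : ∀ β, pdQ (Sum.inl (0, 0)) (H β 0) = intg (∑ μ : Fin N, θ β μ • uv μ 0))
    (h : Fin N → ℕ → DP N) (hdef : ∀ β q, h β q = vdQ 0 (H β q)) :
    (∀ β, intg (h β 0) = intg (∑ μ : Fin N, θ β μ • uv μ 0)) ∧
    (∀ β α, etaAp η α (fun μ => vdQ μ (intg (h β 0))) = 0) ∧
    (LinearIndependent ℂ fun β : Fin N => intg (h β 0)) ∧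
    (∀ β q, intg (h β (q + 1)) = H β q) ∧
    (∀ α β p q, pbEta η (h α p) (H β q) = pbEta η (h β q) (H α p)) :=
  statement0_general N η hsym H hcomm θ hθ hd1 hd0 h hdef
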